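/- Let n, k be positive integers with n > 2k and let τ₀ > 0 be the unique positive real such that ∏_{ℓ=1}^{k}(τ₀^{-2} + ((n/2)+k-2ℓ)^2) = ((n+2k)/(n-2k)) ∏_{ℓ=1}^{k}((n/2)+k-2ℓ)^2. Then 1/√(n+2k-4) ≤ τ₀ ≤ 1/√(n-2k). -/
import Mathlib


open Finset

lemma telescope_aux (c : ℝ) : ∀ k : ℕ,
    (c - 2 * k) * ∏ ℓ ∈ Finset.Icc 1 k, (c - 2 * ℓ + 2) =
      c * ∏ ℓ ∈ Finset.Icc 1 k, (c - 2 * ℓ)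
  | 0 => by simp
  | (k+1) => by
    rw [Finset.prod_Icc_succ_top (Nat.le_add_left 1 k),
        Finset.prod_Icc_succ_top (Nat.le_add_left 1 k)]
    have ih := telescope_aux c k
    push_cast
    push_cast at ih
    linear_combination (c - 2*(k:ℝ) - 2) * ih

theorem tau0_bounds (n k : ℕ) (hk : 0 < k) (hn : 2 * k < n) (τ₀ : ℝ) (hτ : 0 < τ₀)
    (hdef : (∏ ℓ ∈ Finset.Icc 1 k, ((τ₀ ^ 2)⁻¹ + ((n : ℝ) / 2 + k - 2 * ℓ) ^ 2)) =
      (((n : ℝ) + 2 * k) / ((n : ℝ) - 2 * k)) *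
        ∏ ℓ ∈ Finset.Icc 1 k, (((n : ℝ) / 2 + k - 2 * ℓ) ^ 2)) :
    1 / Real.sqrt ((n : ℝ) + 2 * k - 4) ≤ τ₀ ∧ τ₀ ≤ 1 / Real.sqrt ((n : ℝ) - 2 * k) := by
  set c : ℝ := (n : ℝ) / 2 + (k : ℝ) with hc
  have hk1 : (1 : ℝ) ≤ (k : ℝ) := by exact_mod_cast hk
  have hn1 : 2 * (k : ℝ) + 1 ≤ (n : ℝ) := by exact_mod_cast hn
  have hck : 0 < c - 2 * k := by rw [hc]; linarith
  have hbpos : ∀ ℓ ∈ Finset.Icc 1 k, 0 < c - 2 * (ℓ : ℝ) := by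
    intro ℓ hℓ
    have := (Finset.mem_Icc.mp hℓ).2
    have : (ℓ : ℝ) ≤ (k : ℝ) := by exact_mod_cast this
    linarith
  have hb1 : ∀ ℓ ∈ Finset.Icc 1 k, (1 : ℝ) ≤ (ℓ : ℝ) := by
    intro ℓ hℓ
    exact_mod_cast (Finset.mem_Icc.mp hℓ).1
  have hbk : ∀ ℓ ∈ Finset.Icc 1 k, (ℓ : ℝ) ≤ (k : ℝ) := by
    intro ℓ hℓ
    exact_mod_cast (Finset.mem_Icc.mp hℓ).2
  -- key identity
  have key : (((n : ℝ) + 2 * k) / ((n : ℝ) - 2 * k)) *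
      ∏ ℓ ∈ Finset.Icc 1 k, ((c - 2 * (ℓ:ℝ)) ^ 2) =
      ∏ ℓ ∈ Finset.Icc 1 k, ((c - 2 * (ℓ:ℝ)) ^ 2 + 2 * (c - 2 * (ℓ:ℝ))) := by
    have htel := telescope_aux c k
    have hR : ((n : ℝ) + 2 * k) / ((n : ℝ) - 2 * k) = c / (c - 2 * k) := by
      rw [hc]; rw [div_eq_div_iff (by linarith) (by linarith)]; ring
    have hsplit : ∏ ℓ ∈ Finset.Icc 1 k, ((c - 2 * (ℓ:ℝ)) ^ 2 + 2 * (c - 2 * (ℓ:ℝ))) =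
        (∏ ℓ ∈ Finset.Icc 1 k, (c - 2 * (ℓ:ℝ))) *
          ∏ ℓ ∈ Finset.Icc 1 k, (c - 2 * (ℓ:ℝ) + 2) := by
      rw [← Finset.prod_mul_distrib]
      exact Finset.prod_congr rfl (fun ℓ _ => by ring)
    have hsq : ∏ ℓ ∈ Finset.Icc 1 k, ((c - 2 * (ℓ:ℝ)) ^ 2) =
        (∏ ℓ ∈ Finset.Icc 1 k, (c - 2 * (ℓ:ℝ))) *
          ∏ ℓ ∈ Finset.Icc 1 k, (c - 2 * (ℓ:ℝ)) := by
      rw [← Finset.prod_mul_distrib]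
      exact Finset.prod_congr rfl (fun ℓ _ => by ring)
    rw [hR, hsplit, hsq, div_mul_eq_mul_div, div_eq_iff hck.ne']
    linear_combination (-(∏ ℓ ∈ Finset.Icc 1 k, (c - 2 * (ℓ:ℝ)))) * htel
  -- rewrite hdef
  set t : ℝ := (τ₀ ^ 2)⁻¹ with ht
  have htpos : 0 < t := by positivity
  have hdef' : ∏ ℓ ∈ Finset.Icc 1 k, (t + (c - 2 * (ℓ:ℝ)) ^ 2) =
      ∏ ℓ ∈ Finset.Icc 1 k, ((c - 2 * (ℓ:ℝ)) ^ 2 + 2 * (c - 2 * (ℓ:ℝ))) := by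
    rw [← key, ← hdef]
  have hne : (Finset.Icc 1 k).Nonempty := ⟨1, Finset.mem_Icc.mpr ⟨le_refl 1, hk⟩⟩
  -- lower bound on t
  have hlow : (n : ℝ) - 2 * k ≤ t := by
    by_contra h
    push_neg at h
    have h1 : ∏ ℓ ∈ Finset.Icc 1 k, (t + (c - 2 * (ℓ:ℝ)) ^ 2) <
        ∏ ℓ ∈ Finset.Icc 1 k, (((n:ℝ) - 2 * k) + (c - 2 * (ℓ:ℝ)) ^ 2) := by
      apply Finset.prod_lt_prod_of_nonempty _ _ hne
      · intro ℓ hℓ; have := hbpos ℓ hℓ; positivity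
      · intro ℓ _; linarith
    have h2 : ∏ ℓ ∈ Finset.Icc 1 k, (((n:ℝ) - 2 * k) + (c - 2 * (ℓ:ℝ)) ^ 2) ≤
        ∏ ℓ ∈ Finset.Icc 1 k, ((c - 2 * (ℓ:ℝ)) ^ 2 + 2 * (c - 2 * (ℓ:ℝ))) := by
      apply Finset.prod_le_prod
      · intro ℓ _; have : (0:ℝ) ≤ (c - 2 * (ℓ:ℝ))^2 := sq_nonneg _; linarith
      · intro ℓ hℓ
        have := hbk ℓ hℓ
        have hceq : 2 * (c - 2 * (ℓ:ℝ)) = (n:ℝ) + 2*k - 4*ℓ := by rw [hc]; ring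
        nlinarith
    rw [hdef'] at h1
    linarith
  -- upper bound on t
  have hup : t ≤ (n : ℝ) + 2 * k - 4 := by
    by_contra h
    push_neg at h
    have h1 : ∏ ℓ ∈ Finset.Icc 1 k, (((n:ℝ) + 2 * k - 4) + (c - 2 * (ℓ:ℝ)) ^ 2) <
        ∏ ℓ ∈ Finset.Icc 1 k, (t + (c - 2 * (ℓ:ℝ)) ^ 2) := by
      apply Finset.prod_lt_prod_of_nonempty _ _ hne
      · intro ℓ hℓ; have := hbpos ℓ hℓ; have : (0:ℝ) ≤ (c - 2*(ℓ:ℝ))^2 := sq_nonneg _; nlinarith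
      · intro ℓ _; linarith
    have h2 : ∏ ℓ ∈ Finset.Icc 1 k, ((c - 2 * (ℓ:ℝ)) ^ 2 + 2 * (c - 2 * (ℓ:ℝ))) ≤
        ∏ ℓ ∈ Finset.Icc 1 k, (((n:ℝ) + 2 * k - 4) + (c - 2 * (ℓ:ℝ)) ^ 2) := by
      apply Finset.prod_le_prod
      · intro ℓ hℓ; have := hbpos ℓ hℓ; positivity
      · intro ℓ hℓ
        have := hb1 ℓ hℓ
        have hceq : 2 * (c - 2 * (ℓ:ℝ)) = (n:ℝ) + 2*k - 4*ℓ := by rw [hc]; ring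
        nlinarith
    rw [hdef'] at h1
    linarith
  have hnk4 : (0:ℝ) < (n:ℝ) + 2 * k - 4 := by linarith
  have hnk : (0:ℝ) < (n:ℝ) - 2 * k := by linarith
  constructor
  · -- 1/√(n+2k-4) ≤ τ₀
    have hτ2 : ((n:ℝ) + 2 * k - 4)⁻¹ ≤ τ₀ ^ 2 := by
      rw [inv_le_comm₀ hnk4 (by positivity)] at *
      exact hup
    have := Real.sqrt_le_sqrt hτ2
    rw [Real.sqrt_inv, Real.sqrt_sq hτ.le] at this
    rw [one_div]
    exact this
  · have hτ2 : τ₀ ^ 2 ≤ ((n:ℝ) - 2 * k)⁻¹ := by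
      rw [le_inv_comm₀ (by positivity) hnk] at *
      exact hlow
    have := Real.sqrt_le_sqrt hτ2
    rw [Real.sqrt_inv, Real.sqrt_sq hτ.le] at this
    rw [one_div]
    exact this
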